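/- arXiv:2012.13916 — 2 statements merged into one kernel-verified Lean document; each statement's English description precedes it below -/
import Mathlib

section
/- Let Δ ≥ 3 and let xx' and yy' be the two edges of Q_Δ^+ containing a vertex of degree 1. Then every proper edge colouring α of Q_Δ^+ using at most Δ colours satisfies α(xx') = α(yy'). -/
attribute [local instance] Classical.propDecidable

namespace GreedyEdge

variable {V : Type*}

/-- Two edges (as unordered pairs of vertices) share an endpoint. -/
def Shares (e f : Sym2 V) : Prop := ∃ x, x ∈ e ∧ x ∈ f

/-- One step of the greedy procedure: colour the edge `e` with the smallest
colour `≥ 1` not already used on an edge sharing an endpoint with `e`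
(uncoloured edges carry the value `0`). -/
noncomputable def step (c : Sym2 V → ℕ) (e : Sym2 V) : Sym2 V → ℕ :=
  Function.update c e (sInf {k : ℕ | 1 ≤ k ∧ ∀ f : Sym2 V, Shares e f → c f ≠ k})

/-- The greedy edge colouring obtained from the partial colouring `c₀` by
processing the edges of `L` in order (`0` means uncoloured). -/
noncomputable def greedyExtend (c₀ : Sym2 V → ℕ) (L : List (Sym2 V)) : Sym2 V → ℕ :=
  L.foldl step c₀

/-- The greedy edge colouring following the ordering `L` of the edges,
starting from the everywhere-uncoloured function. -/
noncomputable def greedy (L : List (Sym2 V)) : Sym2 V → ℕ :=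
  greedyExtend (fun _ => 0) L

/-- `L` is a connected ordering of the edges of `G`: a linear ordering of the
edge set such that every edge except the first shares an endpoint with some
earlier edge. -/
def ConnOrder (G : SimpleGraph V) (L : List (Sym2 V)) : Prop :=
  L.Nodup ∧ (∀ e, e ∈ L ↔ e ∈ G.edgeSet) ∧
    ∀ i : Fin L.length, 0 < (i : ℕ) →
      ∃ j : Fin L.length, (j : ℕ) < (i : ℕ) ∧ Shares (L.get i) (L.get j)

/-- `c` is a proper edge colouring of `G` using colours from `{1, …, k}`. -/
def IsProperEdgeCol (G : SimpleGraph V) (c : Sym2 V → ℕ) (k : ℕ) : Prop :=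
  (∀ e ∈ G.edgeSet, 1 ≤ c e ∧ c e ≤ k) ∧
    ∀ e ∈ G.edgeSet, ∀ f ∈ G.edgeSet, e ≠ f → Shares e f → c e ≠ c f

/-- The chromatic index `χ'(G)`: the least `k` such that `G` has a proper edge
colouring with colours in `{1, …, k}`. -/
noncomputable def chromIndex (G : SimpleGraph V) : ℕ :=
  sInf {k | ∃ c : Sym2 V → ℕ, IsProperEdgeCol G c k}

/-- The connected greedy chromatic index `χ'_c(G)`: the least number of colours
used by the greedy procedure following a connected ordering of the edges.
(Since the set of colours used by a greedy colouring is `{1, …, max}`, the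
number of colours used is the maximum colour.) -/
noncomputable def connChromIndex (G : SimpleGraph V) : ℕ :=
  sInf {k | ∃ L : List (Sym2 V), ConnOrder G L ∧ ∀ e ∈ G.edgeSet, greedy L e ≤ k}

end GreedyEdge

namespace GreedyEdge

/-- The `n`-dimensional hypercube graph: vertices are elements of `{0,1}ⁿ`,
two vertices being adjacent iff they differ in exactly one coordinate. -/
def hypercube (n : ℕ) : SimpleGraph (Fin n → Bool) :=
  SimpleGraph.fromRel (fun x y => ∃ i, x i ≠ y i ∧ ∀ j, j ≠ i → x j = y j)

/-- The graph `G⁺` obtained from `G` by deleting the edge `xy` and attaching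
two new pendant vertices `x' = Sum.inr true` and `y' = Sum.inr false` to `x`
and `y` respectively. -/
def plusGraph {V : Type*} (G : SimpleGraph V) (x y : V) :
    SimpleGraph (V ⊕ Bool) :=
  SimpleGraph.fromRel (fun a b =>
    (∃ u w : V, a = Sum.inl u ∧ b = Sum.inl w ∧ G.Adj u w ∧ s(u, w) ≠ s(x, y)) ∨
    (a = Sum.inl x ∧ b = Sum.inr true) ∨ (a = Sum.inl y ∧ b = Sum.inr false))

end GreedyEdge

/-! In a proper `k`-edge-colouring of `G⁺`, where `G` is `k`-regular, every vertex of `G` meets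
every colour. So the class of the colour `m` of `xx'` is a matching covering `V(G)` and `x'`; if
`yy'` had another colour it would cover exactly `|V(G)| + 1` vertices, an odd number. For
`G = Q_Δ` the number `|V(G)| = 2^Δ` is even. -/

namespace GreedyEdge

section ProperEdgeColouring

variable {V : Type*} {G : SimpleGraph V} {c : Sym2 V → ℕ} {k : ℕ}

def colourClass (G : SimpleGraph V) (c : Sym2 V → ℕ) (m : ℕ) : G.Subgraph where
  verts := {v | ∃ w, G.Adj v w ∧ c s(v, w) = m}
  Adj v w := G.Adj v w ∧ c s(v, w) = m
  adj_sub h := h.1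
  edge_vert h := ⟨_, h⟩
  symm := ⟨fun _ _ h => ⟨h.1.symm, Sym2.eq_swap ▸ h.2⟩⟩

lemma IsProperEdgeCol.eq_of_adj_of_colour_eq (hc : IsProperEdgeCol G c k) {v w w' : V}
    (hw : G.Adj v w) (hw' : G.Adj v w') (hcol : c s(v, w) = c s(v, w')) : w = w' := by
  by_contra hne
  exact hc.2 _ hw _ hw' (fun h => hne (Sym2.congr_right.1 h))
    ⟨v, Sym2.mem_mk_left _ _, Sym2.mem_mk_left _ _⟩ hcol

lemma IsProperEdgeCol.isMatching_colourClass (hc : IsProperEdgeCol G c k) (m : ℕ) :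
    (colourClass G c m).IsMatching := by
  intro v ⟨w, hw⟩
  exact ⟨w, hw, fun w' hw' => hc.eq_of_adj_of_colour_eq hw'.1 hw.1 (hw'.2.trans hw.2.symm)⟩

lemma IsProperEdgeCol.exists_adj_colour_eq (hc : IsProperEdgeCol G c k) {v : V}
    [Fintype (G.neighborSet v)] (hv : G.degree v = k) {m : ℕ} (hm : m ∈ Finset.Icc 1 k) :
    ∃ w, G.Adj v w ∧ c s(v, w) = m := by
  obtain ⟨w, hw, hcol⟩ := Finset.surjOn_of_injOn_of_card_le (fun w => c s(v, w))
    (fun w hw => Finset.mem_Icc.2 (hc.1 _ ((G.mem_neighborFinset v w).1 hw)))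
    (fun w hw w' hw' h => hc.eq_of_adj_of_colour_eq ((G.mem_neighborFinset v w).1 hw)
      ((G.mem_neighborFinset v w').1 hw') h)
    (by simp [G.card_neighborFinset_eq_degree, hv]) hm
  exact ⟨w, (G.mem_neighborFinset v w).1 hw, hcol⟩

end ProperEdgeColouring

section Hypercube

variable {n : ℕ}

lemma hypercube_adj_iff {v w : Fin n → Bool} :
    (hypercube n).Adj v w ↔ ∃ i, Function.update v i (!v i) = w := by
  simp only [hypercube, SimpleGraph.fromRel_adj]
  constructor
  · rintro ⟨-, ⟨i, hi, hj⟩ | ⟨i, hi, hj⟩⟩ <;> refine ⟨i, funext fun j => ?_⟩ <;>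
      rcases eq_or_ne j i with rfl | hji <;>
      simp_all [Function.update_of_ne, Bool.eq_not_iff, eq_comm]
  · rintro ⟨i, rfl⟩
    refine ⟨fun h => by simpa using congrFun h i, Or.inl ⟨i, by simp, fun j hj => ?_⟩⟩
    simp [Function.update_of_ne hj]

lemma isRegularOfDegree_hypercube : (hypercube n).IsRegularOfDegree n := by
  intro v
  have hN : (hypercube n).neighborFinset v =
      Finset.univ.image (fun i => Function.update v i (!v i)) := by
    ext w
    simp [hypercube_adj_iff]
  rw [← SimpleGraph.card_neighborFinset_eq_degree, hN, Finset.card_image_of_injective,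
    Finset.card_univ, Fintype.card_fin]
  intro i j h
  by_contra hij
  simpa [Function.update_of_ne hij] using congrFun h i

end Hypercube

section PlusGraph

variable {V : Type*} {G : SimpleGraph V} {x y : V}

@[simp] lemma plusGraph_adj_inl_inl {u w : V} :
    (plusGraph G x y).Adj (.inl u) (.inl w) ↔ G.Adj u w ∧ s(u, w) ≠ s(x, y) := by
  simp [plusGraph, G.adj_comm w u]
  grind [G.ne_of_adj]

@[simp] lemma plusGraph_adj_inl_inr {u : V} {b : Bool} :
    (plusGraph G x y).Adj (.inl u) (.inr b) ↔ b = true ∧ u = x ∨ b = false ∧ u = y := by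
  simp only [plusGraph, SimpleGraph.fromRel_adj]
  aesop

@[simp] lemma plusGraph_adj_inr_inl {u : V} {b : Bool} :
    (plusGraph G x y).Adj (.inr b) (.inl u) ↔ b = true ∧ u = x ∨ b = false ∧ u = y := by
  rw [SimpleGraph.adj_comm, plusGraph_adj_inl_inr]

@[simp] lemma plusGraph_not_adj_inr_inr {b b' : Bool} :
    ¬(plusGraph G x y).Adj (.inr b) (.inr b') := by
  simp [plusGraph]

lemma degree_plusGraph_inl [Fintype V] [DecidableRel G.Adj] (hxy : G.Adj x y) (v : V) :
    (plusGraph G x y).degree (.inl v) = G.degree v := by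
  rw [← SimpleGraph.card_neighborFinset_eq_degree, ← SimpleGraph.card_neighborFinset_eq_degree]
  symm
  -- the deleted edge `vw = xy` is traded for the pendant edge at `v`
  refine Finset.card_nbij (fun w => if s(v, w) = s(x, y) then .inr (decide (v = x)) else .inl w)
    ?_ ?_ ?_
  · intro w hw
    have hw : G.Adj v w := by simpa using hw
    simp only [Finset.mem_coe, SimpleGraph.mem_neighborFinset]
    split_ifs with h
    · rcases Sym2.eq_iff.1 h with ⟨rfl, rfl⟩ | ⟨rfl, rfl⟩ <;> simp [hxy.ne.symm]
    · exact plusGraph_adj_inl_inl.2 ⟨hw, h⟩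
  · intro w₁ _ w₂ _ h
    simp only at h
    split_ifs at h with h₁ h₂ h₂
    · exact Sym2.congr_right.1 (h₁.trans h₂.symm)
    · exact Sum.inl.inj h
  · rintro (w | b) hb <;> simp only [Finset.mem_coe, SimpleGraph.mem_neighborFinset] at hb
    · obtain ⟨hvw, hne⟩ := plusGraph_adj_inl_inl.1 hb
      exact ⟨w, by simpa using hvw, if_neg hne⟩
    · rcases plusGraph_adj_inl_inr.1 hb with ⟨rfl, rfl⟩ | ⟨rfl, rfl⟩
      · exact ⟨y, by simpa using hxy, by simp⟩
      · exact ⟨x, by simpa using hxy.symm, by simp [Sym2.eq_swap, hxy.ne.symm]⟩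

theorem IsProperEdgeCol.plusGraph_pendant_colour_eq [Fintype V] [DecidableRel G.Adj] {k : ℕ}
    (hG : G.IsRegularOfDegree k) (hV : Even (Fintype.card V)) (hxy : G.Adj x y)
    {α : Sym2 (V ⊕ Bool) → ℕ} (hα : IsProperEdgeCol (plusGraph G x y) α k) :
    α s(.inl x, .inr true) = α s(.inl y, .inr false) := by
  by_contra hne
  set m := α s(.inl x, .inr true)
  have hm : m ∈ Finset.Icc 1 k := Finset.mem_Icc.2 (hα.1 _ (by simp))
  have hverts : (colourClass (plusGraph G x y) α m).verts = {.inr false}ᶜ := by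
    ext (v | b)
    · simp only [Set.mem_compl_singleton_iff, ne_eq, reduceCtorEq, not_false_eq_true, iff_true]
      exact hα.exists_adj_colour_eq (by rw [degree_plusGraph_inl hxy, hG v]) hm
    · cases b
      · simpa [colourClass, Sym2.eq_swap (a := Sum.inr false)] using Ne.symm hne
      · simp [colourClass, Sym2.eq_swap (a := Sum.inr true), m]
  have hcard := (hα.isMatching_colourClass m).even_card
  simp_rw [hverts, Set.toFinset_compl, Finset.card_compl, Set.toFinset_singleton,
    Finset.card_singleton, Fintype.card_sum, Fintype.card_bool] at hcard
  exact Nat.not_even_iff_odd.2 hV.add_one (by simpa using hcard)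

end PlusGraph

end GreedyEdge

open GreedyEdge in
theorem plus_hypercube_pendant_edges_same_colour_general (Δ : ℕ)
    (x y : Fin Δ → Bool) (hxy : (hypercube Δ).Adj x y)
    (α : Sym2 ((Fin Δ → Bool) ⊕ Bool) → ℕ)
    (hα : IsProperEdgeCol (plusGraph (hypercube Δ) x y) α Δ) :
    α s(Sum.inl x, Sum.inr true) = α s(Sum.inl y, Sum.inr false) := by
  have hΔ : Δ ≠ 0 := by
    rintro rfl
    exact hxy.ne (Subsingleton.elim x y)
  have hcard : Even (Fintype.card (Fin Δ → Bool)) := by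
    simp [Nat.even_pow, hΔ]
  exact hα.plusGraph_pendant_colour_eq isRegularOfDegree_hypercube hcard hxy

open GreedyEdge in
/-- For `Δ ≥ 3`, in every proper edge colouring of `Q_Δ⁺` using at most `Δ`
colours, the two pendant edges `xx'` and `yy'` receive the same colour. -/
theorem plus_hypercube_pendant_edges_same_colour (Δ : ℕ) (hΔ : 3 ≤ Δ)
    (x y : Fin Δ → Bool) (hxy : (hypercube Δ).Adj x y)
    (α : Sym2 ((Fin Δ → Bool) ⊕ Bool) → ℕ)
    (hα : IsProperEdgeCol (plusGraph (hypercube Δ) x y) α Δ) :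
    α s(Sum.inl x, Sum.inr true) = α s(Sum.inl y, Sum.inr false) :=
  plus_hypercube_pendant_edges_same_colour_general Δ x y hxy α hα
end

section
/- Let d ≥ 1 and let G be a finite connected d-regular simple graph admitting a proper edge colouring α : E(G) → {1,…,d}. Then there exists a connected ordering of the edges of G such that the greedy edge colouring following this ordering is exactly α. -/
attribute [local instance] Classical.propDecidable

/-! Grow the ordering one edge at a time from a vertex `x` already reached, always taking an
uncovered edge at `x` of least `α`-colour `c`. As `G` is `d`-regular and `α` uses only `d`
colours, every colour occurs at every vertex, so each colour below `c` already sits on an edge at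
`x` in the ordering; since `α` is proper, greedy then colours the new edge `c`. By connectivity the
process stops only once every edge is covered. -/

namespace GreedyEdge

variable {V : Type*}

lemma step_eq_update {c : Sym2 V → ℕ} {e : Sym2 V} {a : ℕ} (ha : 1 ≤ a)
    (hfree : ∀ f, Shares e f → c f ≠ a)
    (hblocked : ∀ k, 1 ≤ k → k < a → ∃ f, Shares e f ∧ c f = k) :
    step c e = Function.update c e a := by
  have ha_mem : a ∈ {k : ℕ | 1 ≤ k ∧ ∀ f, Shares e f → c f ≠ k} := ⟨ha, hfree⟩
  unfold step
  congr 1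
  refine le_antisymm (Nat.sInf_le ha_mem) (le_csInf ⟨a, ha_mem⟩ ?_)
  rintro k ⟨hk, hkfree⟩
  by_contra! hka
  obtain ⟨f, hef, hfk⟩ := hblocked k hk hka
  exact hkfree f hef hfk

lemma greedy_append_singleton (L : List (Sym2 V)) (e : Sym2 V) :
    greedy (L ++ [e]) = step (greedy L) e := by
  simp [greedy, greedyExtend]

lemma exists_incident_of_colour {G : SimpleGraph V} [G.LocallyFinite] {d : ℕ}
    (hreg : G.IsRegularOfDegree d) {α : Sym2 V → ℕ} (hα : IsProperEdgeCol G α d) (x : V)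
    {k : ℕ} (hk : k ∈ Finset.Icc 1 d) : ∃ e ∈ G.edgeSet, x ∈ e ∧ α e = k := by
  have hinj : Set.InjOn α (G.incidenceFinset x : Set (Sym2 V)) := by
    intro e he f hf hef
    simp only [Finset.mem_coe, SimpleGraph.mem_incidenceFinset] at he hf
    by_contra hne
    exact hα.2 e he.1 f hf.1 hne ⟨x, he.2, hf.2⟩ hef
  -- the `d` edges at `x` carry `d` distinct colours from `{1, …, d}`
  have himage : (G.incidenceFinset x).image α = Finset.Icc 1 d := by
    refine Finset.eq_of_subset_of_card_le ?_ ?_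
    · intro m hm
      obtain ⟨e, he, rfl⟩ := Finset.mem_image.1 hm
      exact Finset.mem_Icc.2 (hα.1 e ((G.mem_incidenceFinset x e).1 he).1)
    · rw [Finset.card_image_of_injOn hinj, SimpleGraph.card_incidenceFinset_eq_degree, hreg x,
        Nat.card_Icc, Nat.add_sub_cancel]
  obtain ⟨e, he, rfl⟩ := Finset.mem_image.1 (himage ▸ hk)
  exact ⟨e, ((G.mem_incidenceFinset x e).1 he).1, ((G.mem_incidenceFinset x e).1 he).2, rfl⟩

lemma exists_frontier_vertex {G : SimpleGraph V} (hG : G.Preconnected) {L : List (Sym2 V)}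
    {e₀ : Sym2 V} (he₀ : e₀ ∈ G.edgeSet) (he₀L : e₀ ∉ L) :
    ∃ x, (L = [] ∨ ∃ g ∈ L, x ∈ g) ∧ ∃ f ∈ G.edgeSet, f ∉ L ∧ x ∈ f := by
  set S : Set V := {x | ∃ g ∈ L, x ∈ g}
  have hu : e₀.out.1 ∈ e₀ := Sym2.out_fst_mem e₀
  rcases eq_or_ne L [] with rfl | hL
  · exact ⟨_, Or.inl rfl, e₀, he₀, he₀L, hu⟩
  by_cases huS : e₀.out.1 ∈ S
  · exact ⟨_, Or.inr huS, e₀, he₀, he₀L, hu⟩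
  obtain ⟨g₀, hg₀⟩ := List.exists_mem_of_ne_nil L hL
  obtain ⟨p⟩ := hG g₀.out.1 e₀.out.1
  obtain ⟨d, -, hfst, hsnd⟩ := p.exists_boundary_dart S ⟨g₀, hg₀, Sym2.out_fst_mem g₀⟩ huS
  exact ⟨d.fst, Or.inr hfst, d.edge, d.edge_mem,
    fun hdL => hsnd ⟨d.edge, hdL, Sym2.mem_mk_right _ _⟩, Sym2.mem_mk_left _ _⟩

/-- Prefixes of the sought ordering: each edge `e` sees every colour below `α e` on an earlier
neighbouring edge, so that greedy gives it exactly `α e` (`GreedyPrefix.greedy_eq`). -/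
inductive GreedyPrefix (G : SimpleGraph V) (α : Sym2 V → ℕ) : List (Sym2 V) → Prop
  | nil : GreedyPrefix G α []
  | snoc {L : List (Sym2 V)} {e : Sym2 V} : GreedyPrefix G α L → e ∈ G.edgeSet → e ∉ L →
      (L ≠ [] → ∃ f ∈ L, Shares e f) →
      (∀ k, 1 ≤ k → k < α e → ∃ f ∈ L, Shares e f ∧ α f = k) → GreedyPrefix G α (L ++ [e])

namespace GreedyPrefix

variable {G : SimpleGraph V} {α : Sym2 V → ℕ} {L : List (Sym2 V)}

lemma mem_edgeSet (h : GreedyPrefix G α L) {e : Sym2 V} (he : e ∈ L) : e ∈ G.edgeSet := by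
  induction h with
  | nil => simp at he
  | snoc _ heG _ _ _ ih =>
    rcases List.mem_append.1 he with he | he
    · exact ih he
    · rwa [List.mem_singleton.1 he]

lemma nodup (h : GreedyPrefix G α L) : L.Nodup := by
  induction h with
  | nil => exact List.nodup_nil
  | @snoc L e _ _ heL _ _ ih => simpa [← List.concat_eq_append, List.nodup_concat] using ⟨heL, ih⟩

lemma exists_shares_earlier (h : GreedyPrefix G α L) (i : Fin L.length) (hi : 0 < (i : ℕ)) :
    ∃ j : Fin L.length, (j : ℕ) < i ∧ Shares (L.get i) (L.get j) := by
  induction h with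
  | nil => exact i.elim0
  | @snoc L e _ _ _ hconn _ ih =>
    obtain ⟨i, hi'⟩ := i
    simp only [List.length_append, List.length_singleton] at hi'
    rcases Nat.lt_succ_iff_lt_or_eq.1 hi' with hiL | rfl
    · obtain ⟨⟨j, hjL⟩, hji, hshare⟩ := ih ⟨i, hiL⟩ hi
      refine ⟨⟨j, by simp; omega⟩, hji, ?_⟩
      simpa [List.getElem_append_left hiL, List.getElem_append_left hjL] using hshare
    · obtain ⟨f, hfL, hshare⟩ := hconn (List.ne_nil_of_length_pos hi)
      obtain ⟨j, hjL, rfl⟩ := List.getElem_of_mem hfL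
      refine ⟨⟨j, by simp; omega⟩, hjL, ?_⟩
      simpa [List.getElem_append_left hjL] using hshare

lemma connOrder (h : GreedyPrefix G α L) (hall : ∀ e ∈ G.edgeSet, e ∈ L) : ConnOrder G L :=
  ⟨h.nodup, fun _ => ⟨h.mem_edgeSet, hall _⟩, h.exists_shares_earlier⟩

lemma greedy_eq {k : ℕ} (hα : IsProperEdgeCol G α k) (h : GreedyPrefix G α L) :
    greedy L = fun f => if f ∈ L then α f else 0 := by
  induction h with
  | nil => rfl
  | @snoc L e hL heG heL _ hblocked ih =>
    have hfree : ∀ f, Shares e f → (if f ∈ L then α f else 0) ≠ α e := by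
      intro f hef
      split_ifs with hfL
      · exact (hα.2 e heG f (hL.mem_edgeSet hfL) (by rintro rfl; exact heL hfL) hef).symm
      · exact (Nat.one_le_iff_ne_zero.1 (hα.1 e heG).1).symm
    have hblocked' : ∀ k, 1 ≤ k → k < α e → ∃ f, Shares e f ∧ (if f ∈ L then α f else 0) = k := by
      intro k hk hke
      obtain ⟨f, hfL, hef, hfk⟩ := hblocked k hk hke
      exact ⟨f, hef, by rw [if_pos hfL, hfk]⟩
    rw [greedy_append_singleton, ih, step_eq_update (hα.1 e heG).1 hfree hblocked']
    funext f
    by_cases hfe : f = e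
    · subst hfe; simp
    · simp [hfe]

/-- Each colour below `α e` occurs at `x`, and on an edge of `L`, since otherwise that edge would
have been a cheaper choice than `e`. -/
lemma snoc_of_min_colour_at {d : ℕ} [G.LocallyFinite] (hreg : G.IsRegularOfDegree d)
    (hα : IsProperEdgeCol G α d) (h : GreedyPrefix G α L) {x : V} {e : Sym2 V}
    (hx : L = [] ∨ ∃ g ∈ L, x ∈ g) (he : e ∈ G.edgeSet) (heL : e ∉ L) (hxe : x ∈ e)
    (hmin : ∀ f ∈ G.edgeSet, f ∉ L → x ∈ f → α e ≤ α f) : GreedyPrefix G α (L ++ [e]) := by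
  refine h.snoc he heL (fun hL => ?_) fun k hk hke => ?_
  · obtain ⟨g, hgL, hxg⟩ := hx.resolve_left hL
    exact ⟨g, hgL, x, hxe, hxg⟩
  · obtain ⟨f, hf, hxf, rfl⟩ := exists_incident_of_colour hreg hα x
      (Finset.mem_Icc.2 ⟨hk, hke.le.trans (hα.1 e he).2⟩)
    have hfL : f ∈ L := by
      by_contra hfL
      exact (hmin f hf hfL hxf).not_gt hke
    exact ⟨f, hfL, ⟨x, hxe, hxf⟩, rfl⟩

lemma exists_snoc {d : ℕ} [G.LocallyFinite] (hG : G.Preconnected) (hreg : G.IsRegularOfDegree d)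
    (hα : IsProperEdgeCol G α d) (h : GreedyPrefix G α L) {e₀ : Sym2 V} (he₀ : e₀ ∈ G.edgeSet)
    (he₀L : e₀ ∉ L) : ∃ e, GreedyPrefix G α (L ++ [e]) := by
  obtain ⟨x, hx, hfrontier⟩ := exists_frontier_vertex hG he₀ he₀L
  have hcol : ∃ k, ∃ f ∈ G.edgeSet, f ∉ L ∧ x ∈ f ∧ α f = k := by
    obtain ⟨f, hf, hfL, hxf⟩ := hfrontier
    exact ⟨α f, f, hf, hfL, hxf, rfl⟩
  obtain ⟨e, he, heL, hxe, hek⟩ := Nat.find_spec hcol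
  exact ⟨e, h.snoc_of_min_colour_at hreg hα hx he heL hxe fun f hf hfL hxf =>
    hek ▸ Nat.find_min' hcol ⟨f, hf, hfL, hxf, rfl⟩⟩

lemma exists_forall_mem [Fintype V] {d : ℕ} {L : List (Sym2 V)} (hG : G.Preconnected)
    (hreg : G.IsRegularOfDegree d) (hα : IsProperEdgeCol G α d) (h : GreedyPrefix G α L) :
    ∃ L', GreedyPrefix G α L' ∧ ∀ e ∈ G.edgeSet, e ∈ L' := by
  by_cases hall : ∀ e ∈ G.edgeSet, e ∈ L
  · exact ⟨L, h, hall⟩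
  push Not at hall
  obtain ⟨e₀, he₀, he₀L⟩ := hall
  obtain ⟨e, he⟩ := h.exists_snoc hG hreg hα he₀ he₀L
  exact he.exists_forall_mem hG hreg hα
termination_by Fintype.card (Sym2 V) - L.length
decreasing_by
  have := he.nodup.length_le_card
  simp only [List.length_append, List.length_singleton] at this ⊢
  omega

end GreedyPrefix

end GreedyEdge

open GreedyEdge in
theorem regular_connected_greedy_realises_colouring_general {V : Type*} [Fintype V]
    (d : ℕ) (G : SimpleGraph V) (hG : G.Connected)
    (hreg : G.IsRegularOfDegree d) (α : Sym2 V → ℕ)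
    (hα : IsProperEdgeCol G α d) :
    ∃ L : List (Sym2 V), ConnOrder G L ∧ ∀ e ∈ G.edgeSet, greedy L e = α e := by
  obtain ⟨L, hL, hall⟩ := GreedyPrefix.nil.exists_forall_mem hG.preconnected hreg hα
  refine ⟨L, hL.connOrder hall, fun e he => ?_⟩
  rw [hL.greedy_eq hα]
  exact if_pos (hall e he)

open GreedyEdge in
/-- If `G` is a finite connected `d`-regular simple graph admitting a proper
edge colouring `α` with colours in `{1,…,d}`, then some connected ordering of
the edges has greedy colouring exactly `α`. -/
theorem regular_connected_greedy_realises_colouring {V : Type*} [Fintype V]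
    (d : ℕ) (hd : 1 ≤ d) (G : SimpleGraph V) (hG : G.Connected)
    (hreg : G.IsRegularOfDegree d) (α : Sym2 V → ℕ)
    (hα : IsProperEdgeCol G α d) :
    ∃ L : List (Sym2 V), ConnOrder G L ∧ ∀ e ∈ G.edgeSet, greedy L e = α e :=
  regular_connected_greedy_realises_colouring_general d G hG hreg α hα
end
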